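/- Let F : C → C be a map that is continuous with respect to the distance d and infinity-preserving. Then there exists an integer l ∈ ℕ such that for every configuration x ∈ C with x_0 = 0, the value F(x)_0 is finite and |F(x)_0| ≤ l. -/

import Mathlib

open Filter

/-- The set `Z̃ = ℤ ∪ {−∞, +∞}` of extended integers. -/
abbrev Ztilde := WithBot (WithTop ℤ)

/-- Embedding of `ℤ` into `Z̃`. -/
def Ztilde.ofInt (z : ℤ) : Ztilde := ((z : WithTop ℤ) : WithBot (WithTop ℤ))

/-- The underlying integer of a finite extended integer (0 on `±∞`). -/
def Ztilde.toInt (n : Ztilde) : ℤ := WithTop.untopD 0 (WithBot.unbotD 0 n)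

/-- The sand-automata configuration space `C = Z̃^(ℤ^d)`. -/
abbrev Conf (d : ℕ) := (Fin d → ℤ) → Ztilde

/-- `ζ : C → {0,1}^(ℤ^(d+1))`, `ζ(x)_(i,k) = 1` iff `x_i ≥ k`. -/
noncomputable def zeta {d : ℕ} (x : Conf d) : (Fin d → ℤ) × ℤ → Bool :=
  fun j => decide (Ztilde.ofInt j.2 ≤ x j.1)

/-- The subshift `S_K`: configurations with no `0` below a `1` in a column. -/
def SK (d : ℕ) : Set ((Fin d → ℤ) × ℤ → Bool) :=
  {y | ∀ (i : Fin d → ℤ) (k : ℤ), y (i, k + 1) = true → y (i, k) = true}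

/-- The sup-norm `|j|_∞` of an index in `ℤ^(d+1) = ℤ^d × ℤ`. -/
def idxNorm {d : ℕ} (j : (Fin d → ℤ) × ℤ) : ℕ :=
  max (Finset.univ.sup fun t => (j.1 t).natAbs) j.2.natAbs

open scoped Classical in
/-- The distance `d(x,y) = 2^(−min{|j|_∞ : ζ(x)_j ≠ ζ(y)_j})`, `0` if `x = y`. -/
noncomputable def saDist {d : ℕ} (x y : Conf d) : ℝ :=
  if x = y then 0
  else (2 : ℝ) ^ (-((sInf {n : ℕ | ∃ j, idxNorm j = n ∧ zeta x j ≠ zeta y j} : ℕ) : ℤ))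

/-- The measuring device `β_r^m`. -/
noncomputable def beta (r : ℕ) (m : ℤ) (n : Ztilde) : Ztilde :=
  if Ztilde.ofInt (m + r) < n then ⊤
  else if n < Ztilde.ofInt (m - r) then ⊥
  else Ztilde.ofInt (n.toInt - m)

/-- The neighborhood `[−r,r]^d \ {0}` of a sand automaton of radius `r`. -/
def Nbhd (d r : ℕ) := {k : Fin d → ℤ // (∀ t, (k t).natAbs ≤ r) ∧ k ≠ 0}

/-- The range `R_r^i(x)` of center `i` and radius `r`. -/
noncomputable def saRange {d : ℕ} (r : ℕ) (x : Conf d) (i : Fin d → ℤ) : Nbhd d r → Ztilde :=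
  fun k => beta r (x i).toInt (x (i + k.1))

/-- A sand automaton of dimension `d`: a radius `r` and a local rule `f`
taking values in `{−r,…,r}`. -/
structure SandAutomaton (d : ℕ) where
  r : ℕ
  f : (Nbhd d r → Ztilde) → ℤ
  f_mem : ∀ R, (f R).natAbs ≤ r

/-- The global rule `F : C → C` of a sand automaton. -/
noncomputable def SandAutomaton.global {d : ℕ} (S : SandAutomaton d) (x : Conf d) : Conf d :=
  fun i => if x i = ⊤ ∨ x i = ⊥ then x i
    else Ztilde.ofInt ((x i).toInt + S.f (saRange S.r x i))

/-- The shift map `σ^k`. -/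
def shift {d : ℕ} (k : Fin d → ℤ) (x : Conf d) : Conf d := fun i => x (i + k)

/-- The raising map `ρ`. -/
def raise {d : ℕ} (x : Conf d) : Conf d :=
  fun i => if x i = ⊤ ∨ x i = ⊥ then x i else Ztilde.ofInt ((x i).toInt + 1)

/-- A map `F : C → C` is infinity-preserving. -/
def InfinityPreserving {d : ℕ} (F : Conf d → Conf d) : Prop :=
  ∀ (x : Conf d) (i : Fin d → ℤ),
    (F x i = ⊤ ↔ x i = ⊤) ∧ (F x i = ⊥ ↔ x i = ⊥)

/-! `ζ` identifies `(C, d)` with `SK`, a closed subset of the compact Cantor space, so every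
ultrafilter on a family of configurations has a limit in `C`. Two bits of `ζ` pin down a finite
height, so by continuity `x ↦ F(x)_0` is constant near any `x` with `x_0 = 0`, where it is finite
by infinity preservation. An unbounded family with `x_0 = 0` would have a limit at which this fails.
-/

namespace Ztilde

lemma ofInt_le_ofInt {a b : ℤ} : ofInt a ≤ ofInt b ↔ a ≤ b := by
  simp [ofInt]

lemma bot_lt_ofInt (z : ℤ) : ⊥ < ofInt z := by simp [ofInt]

lemma ofInt_ne_top (z : ℤ) : ofInt z ≠ ⊤ := by simp [ofInt]

lemma exists_eq_ofInt {a : Ztilde} (hbot : a ≠ ⊥) (htop : a ≠ ⊤) : ∃ z, a = ofInt z := by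
  obtain ⟨b, rfl⟩ := WithBot.ne_bot_iff_exists.mp hbot
  obtain ⟨z, rfl⟩ := WithTop.ne_top_iff_exists.mp (by simpa using htop)
  exact ⟨z, rfl⟩

lemma eq_bot_or_eq_top_or_exists_eq_ofInt (a : Ztilde) : a = ⊥ ∨ a = ⊤ ∨ ∃ z, a = ofInt z := by
  by_cases hbot : a = ⊥
  · exact .inl hbot
  by_cases htop : a = ⊤
  · exact .inr (.inl htop)
  exact .inr (.inr (exists_eq_ofInt hbot htop))

lemma eq_ofInt_of_ofInt_le {a : Ztilde} {z : ℤ} (hz : ofInt z ≤ a) (hz1 : ¬ ofInt (z + 1) ≤ a) :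
    a = ofInt z := by
  obtain ⟨w, rfl⟩ := exists_eq_ofInt (bot_lt_ofInt z |>.trans_le hz).ne'
    (fun h => hz1 (h ▸ le_top))
  rw [ofInt_le_ofInt] at hz hz1
  rw [show w = z by omega]

lemma le_of_forall_ofInt_le {a b : Ztilde} (h : ∀ k, ofInt k ≤ a → ofInt k ≤ b) : a ≤ b := by
  rcases eq_bot_or_eq_top_or_exists_eq_ofInt a with rfl | rfl | ⟨z, rfl⟩
  · exact bot_le
  · rcases eq_bot_or_eq_top_or_exists_eq_ofInt b with rfl | rfl | ⟨w, rfl⟩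
    · exact absurd (h 0 le_top) (bot_lt_ofInt 0).not_ge
    · exact le_rfl
    · have := ofInt_le_ofInt.mp (h (w + 1) le_top)
      omega
  · exact h z le_rfl

lemma exists_ofInt_le_iff {P : ℤ → Prop} (hP : Antitone P) :
    ∃ a : Ztilde, ∀ k, ofInt k ≤ a ↔ P k := by
  refine ⟨sSup (ofInt '' {k | P k}), fun k => ⟨fun hk => ?_, fun hk => le_sSup ⟨k, hk, rfl⟩⟩⟩
  by_contra hPk
  have hle : sSup (ofInt '' {k | P k}) ≤ ofInt (k - 1) := by
    refine sSup_le ?_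
    rintro _ ⟨k', hk', rfl⟩
    rw [ofInt_le_ofInt]
    by_contra hlt
    exact hPk (hP (by omega) hk')
  have := ofInt_le_ofInt.mp (hk.trans hle)
  omega

end Ztilde

section Configurations

variable {d : ℕ}

lemma zeta_eq_true {x : Conf d} {i : Fin d → ℤ} {k : ℤ} :
    zeta x (i, k) = true ↔ Ztilde.ofInt k ≤ x i := by
  simp [zeta]

lemma zeta_injective : Function.Injective (zeta (d := d)) := by
  intro x y h
  have hcol (i : Fin d → ℤ) (k : ℤ) : Ztilde.ofInt k ≤ x i ↔ Ztilde.ofInt k ≤ y i := by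
    rw [← zeta_eq_true, ← zeta_eq_true, h]
  funext i
  exact le_antisymm (Ztilde.le_of_forall_ofInt_le fun k => (hcol i k).1)
    (Ztilde.le_of_forall_ofInt_le fun k => (hcol i k).2)

lemma zeta_mem_SK (x : Conf d) : zeta x ∈ SK d := by
  intro i k hk
  rw [zeta_eq_true] at hk ⊢
  exact (Ztilde.ofInt_le_ofInt.mpr (Int.le_add_one le_rfl)).trans hk

lemma exists_zeta_eq_of_mem_SK {y : (Fin d → ℤ) × ℤ → Bool} (hy : y ∈ SK d) :
    ∃ x : Conf d, zeta x = y := by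
  have hcol (i : Fin d → ℤ) : ∃ a : Ztilde, ∀ k, Ztilde.ofInt k ≤ a ↔ y (i, k) = true :=
    Ztilde.exists_ofInt_le_iff (antitone_int_of_succ_le fun k => hy i k)
  choose x hx using hcol
  refine ⟨x, funext fun j => ?_⟩
  rw [Bool.eq_iff_iff, zeta_eq_true, hx]

lemma isClosed_SK : IsClosed (SK d) := by
  have hclopen (j : (Fin d → ℤ) × ℤ) : IsClopen {y : (Fin d → ℤ) × ℤ → Bool | y j = true} :=
    (isClopen_discrete {true}).preimage (continuous_apply j)
  simp only [SK, Set.ofPred_forall, imp_iff_not_or, Set.ofPred_or]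
  exact isClosed_iInter fun i => isClosed_iInter fun k =>
    (hclopen _).compl.isClosed.union (hclopen _).isClosed

def AgreeUpTo (m : ℕ) (x y : Conf d) : Prop :=
  ∀ j, idxNorm j ≤ m → zeta x j = zeta y j

lemma AgreeUpTo.symm {m : ℕ} {x y : Conf d} (h : AgreeUpTo m x y) : AgreeUpTo m y x :=
  fun j hj => (h j hj).symm

lemma saDist_lt_two_zpow_iff {m : ℕ} {x y : Conf d} :
    saDist x y < (2 : ℝ) ^ (-(m : ℤ)) ↔ AgreeUpTo m x y := by
  by_cases hxy : x = y
  · subst hxy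
    simp only [saDist, if_true]
    exact iff_of_true (by positivity) fun _ _ => rfl
  obtain ⟨j₀, hj₀⟩ := Function.ne_iff.mp (zeta_injective.ne hxy)
  have hne : {n | ∃ j, idxNorm j = n ∧ zeta x j ≠ zeta y j}.Nonempty := ⟨_, j₀, rfl, hj₀⟩
  rw [saDist, if_neg hxy, zpow_lt_zpow_iff_right₀ one_lt_two, neg_lt_neg_iff, Nat.cast_lt]
  constructor
  · intro h j hj
    by_contra hne
    exact h.not_ge (le_trans (Nat.sInf_le ⟨j, rfl, hne⟩) hj)
  · intro h
    obtain ⟨j, hj, hne⟩ := Nat.sInf_mem hne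
    by_contra hle
    exact hne (h j (hj ▸ not_lt.mp hle))

lemma idxNorm_zero_fst (k : ℤ) : idxNorm ((0 : Fin d → ℤ), k) = k.natAbs := by
  simp [idxNorm]

lemma AgreeUpTo.eq_ofInt {m : ℕ} {x y : Conf d} (h : AgreeUpTo m x y) {i : Fin d → ℤ} {z : ℤ}
    (hx : x i = Ztilde.ofInt z) (hz : idxNorm (i, z) ≤ m) (hz1 : idxNorm (i, z + 1) ≤ m) :
    y i = Ztilde.ofInt z := by
  have hz' : Ztilde.ofInt z ≤ y i := by
    rw [← zeta_eq_true, ← h _ hz, zeta_eq_true, hx]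
  have hz1' : ¬ Ztilde.ofInt (z + 1) ≤ y i := by
    rw [← zeta_eq_true, ← h _ hz1, zeta_eq_true, hx, Ztilde.ofInt_le_ofInt]
    omega
  exact Ztilde.eq_ofInt_of_ofInt_le hz' hz1'

lemma InfinityPreserving.exists_eq_ofInt {F : Conf d → Conf d} (hF : InfinityPreserving F)
    {x : Conf d} {i : Fin d → ℤ} {z : ℤ} (hx : x i = Ztilde.ofInt z) :
    ∃ w, F x i = Ztilde.ofInt w :=
  Ztilde.exists_eq_ofInt (fun h => (Ztilde.bot_lt_ofInt z).ne' (hx ▸ (hF x i).2.1 h))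
    (fun h => Ztilde.ofInt_ne_top z (hx ▸ (hF x i).1.1 h))

lemma finite_setOf_idxNorm_le (m : ℕ) : {j : (Fin d → ℤ) × ℤ | idxNorm j ≤ m}.Finite := by
  refine ((Set.Finite.pi fun _ => Set.finite_Icc (-(m : ℤ)) m).prod
    (Set.finite_Icc (-(m : ℤ)) m)).subset ?_
  rintro ⟨i, k⟩ hj
  simp only [idxNorm, Set.mem_ofPred_eq, max_le_iff, Finset.sup_le_iff, Finset.mem_univ,
    true_implies] at hj
  refine ⟨fun t _ => ?_, ?_⟩ <;> simp only [Set.mem_Icc]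
  · have := hj.1 t
    omega
  · omega

lemma exists_eventually_agreeUpTo {ι : Type*} (xs : ι → Conf d) (U : Ultrafilter ι) :
    ∃ x : Conf d, ∀ m, ∀ᶠ l in U, AgreeUpTo m (xs l) x := by
  obtain ⟨y, hySK, hy⟩ := isClosed_SK.isCompact.ultrafilter_le_nhds (U.map (zeta ∘ xs))
    (by rw [Ultrafilter.coe_map, le_principal_iff, mem_map]
        exact univ_mem' fun l => zeta_mem_SK (xs l))
  obtain ⟨x, rfl⟩ := exists_zeta_eq_of_mem_SK hySK
  refine ⟨x, fun m => ?_⟩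
  rw [Ultrafilter.coe_map] at hy
  have hcoord (j : (Fin d → ℤ) × ℤ) : ∀ᶠ l in U, zeta (xs l) j = zeta x j := by
    simpa [nhds_discrete] using tendsto_pi_nhds.1 hy j
  exact (eventually_all_finite (finite_setOf_idxNorm_le m)).2 fun j _ => hcoord j

end Configurations

lemma exists_two_zpow_lt {δ : ℝ} (hδ : 0 < δ) : ∃ m : ℕ, (2 : ℝ) ^ (-(m : ℤ)) < δ := by
  obtain ⟨m, hm⟩ := exists_pow_lt_of_lt_one hδ (by norm_num : (2 : ℝ)⁻¹ < 1)
  exact ⟨m, by simpa [zpow_neg] using hm⟩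

theorem bounded_image_at_origin_general (d : ℕ) (F : Conf d → Conf d)
    (hcont : ∀ x : Conf d, ∀ ε : ℝ, 0 < ε → ∃ δ : ℝ, 0 < δ ∧
      ∀ y : Conf d, saDist x y < δ → saDist (F x) (F y) < ε)
    (hinf : InfinityPreserving F) :
    ∃ l : ℕ, ∀ x : Conf d, x 0 = Ztilde.ofInt 0 →
      ∃ z : ℤ, F x 0 = Ztilde.ofInt z ∧ z.natAbs ≤ l := by
  by_contra! hunbdd
  choose xs hxs0 hxs using hunbdd
  obtain ⟨x, hx⟩ := exists_eventually_agreeUpTo xs (hyperfilter ℕ)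
  have hx0 : x 0 = Ztilde.ofInt 0 := by
    obtain ⟨l, hl⟩ := (hx 1).exists
    exact hl.eq_ofInt (hxs0 l) (by simp [idxNorm_zero_fst]) (by simp [idxNorm_zero_fst])
  obtain ⟨z, hz⟩ := hinf.exists_eq_ofInt hx0
  obtain ⟨δ, hδ, hFδ⟩ := hcont x (2 ^ (-((z.natAbs + 1 : ℕ) : ℤ))) (by positivity)
  obtain ⟨m, hm⟩ := exists_two_zpow_lt hδ
  obtain ⟨l, hlm, hlz⟩ :=
    ((hx m).and (Nat.hyperfilter_le_atTop (eventually_ge_atTop z.natAbs))).exists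
  have hF : AgreeUpTo (z.natAbs + 1) (F x) (F (xs l)) :=
    saDist_lt_two_zpow_iff.1 (hFδ _ ((saDist_lt_two_zpow_iff.2 hlm.symm).trans hm))
  have := hxs l z <|
    hF.eq_ofInt hz (by simp [idxNorm_zero_fst]) (by simp [idxNorm_zero_fst]; omega)
  omega

/-- If `F : C → C` is continuous w.r.t. `d` and
infinity-preserving, then there is `l ∈ ℕ` such that for every configuration
`x` with `x_0 = 0`, the value `F(x)_0` is finite and `|F(x)_0| ≤ l`. -/
theorem bounded_image_at_origin (d : ℕ) (hd : 1 ≤ d) (F : Conf d → Conf d)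
    (hcont : ∀ x : Conf d, ∀ ε : ℝ, 0 < ε → ∃ δ : ℝ, 0 < δ ∧
      ∀ y : Conf d, saDist x y < δ → saDist (F x) (F y) < ε)
    (hinf : InfinityPreserving F) :
    ∃ l : ℕ, ∀ x : Conf d, x 0 = Ztilde.ofInt 0 →
      ∃ z : ℤ, F x 0 = Ztilde.ofInt z ∧ z.natAbs ≤ l :=
  bounded_image_at_origin_general d F hcont hinf
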